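/- Let $V_h$ be a finite-dimensional subspace of a real Hilbert space $V$, let $a$ be a bounded coercive bilinear form on $V$ with constants $M, \alpha$, and suppose $u \in V$, $u_h \in V_h$ satisfy $a(u - u_h, v_h) = R(v_h)$ for all $v_h \in V_h$ with $|R(v)| \le \rho_1 \|v\|$. Let $w \in V$ satisfy, for a given bounded functional $\ell$ with $\|\ell\| = 1$, the identity $\ell(v) = a(v, w) - R_w(v)$ for all $v \in V$, where $|R_w(v)| \le \rho_2 \|v\|$. Then for any $w_h \in V_h$: $|\ell(u - u_h)| \le M \|u - u_h\| \|w - w_h\| + \rho_1 \|w - w_h\| + \rho_2 \|u - u_h\| + |R(w)|$. -/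
import Mathlib


/-- abstract Aubin–Nitsche duality estimate with perturbation terms. -/
theorem stmt_16 {V : Type*} [NormedAddCommGroup V] [InnerProductSpace ℝ V]
    (Vh : Submodule ℝ V)
    (a : V →ₗ[ℝ] V →ₗ[ℝ] ℝ) (M α : ℝ)
    (hb : ∀ u v : V, |a u v| ≤ M * ‖u‖ * ‖v‖)
    (hc : 0 < α) (hcoer : ∀ v : V, α * ‖v‖ ^ 2 ≤ a v v)
    (u uh w : V) (huh : uh ∈ Vh)
    (R Rw : V →ₗ[ℝ] ℝ) (ρ1 ρ2 : ℝ)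
    (hR : ∀ v : V, |R v| ≤ ρ1 * ‖v‖) (hRw : ∀ v : V, |Rw v| ≤ ρ2 * ‖v‖)
    (horth : ∀ vh ∈ Vh, a (u - uh) vh = R vh)
    (ℓ : V →L[ℝ] ℝ) (hℓ : ‖ℓ‖ = 1)
    (hdual : ∀ v : V, ℓ v = a v w - Rw v) :
    ∀ wh ∈ Vh, |ℓ (u - uh)| ≤
      M * ‖u - uh‖ * ‖w - wh‖ + ρ1 * ‖w - wh‖ + ρ2 * ‖u - uh‖ + |R w| := by
  intro wh hwh
  have key : ℓ (u - uh) = a (u - uh) (w - wh) - Rw (u - uh) - R (w - wh) + R w := by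
    have h1 := horth wh hwh
    have h2 : a (u - uh) w = a (u - uh) (w - wh) + a (u - uh) wh := by
      rw [← map_add, sub_add_cancel]
    rw [hdual, h2, h1]
    simp only [map_sub]
    ring
  rw [key]
  calc |a (u - uh) (w - wh) - Rw (u - uh) - R (w - wh) + R w|
      ≤ |a (u - uh) (w - wh)| + |Rw (u - uh)| + |R (w - wh)| + |R w| := by
        have h1 := abs_add_le (a (u - uh) (w - wh) - Rw (u - uh) - R (w - wh)) (R w)
        have h2 := abs_sub (a (u - uh) (w - wh) - Rw (u - uh)) (R (w - wh))
        have h3 := abs_sub (a (u - uh) (w - wh)) (Rw (u - uh))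
        linarith
    _ ≤ M * ‖u - uh‖ * ‖w - wh‖ + ρ2 * ‖u - uh‖ + ρ1 * ‖w - wh‖ + |R w| := by
        have := hb (u - uh) (w - wh); have := hRw (u - uh); have := hR (w - wh)
        linarith
    _ = _ := by ring
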